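/- With the notation of rank-sparsity incoherence, for every ρ > 0 the composed projection satisfies ‖P_Ω ∘ P_T‖_{♯(ρ)→♯(ρ)} ≤ α(ρ)β(ρ), where ‖·‖_{♯(ρ)→♯(ρ)} is the induced operator norm with respect to ‖M‖_{♯(ρ)} = max{ρ‖M‖_{1→1}, ρ^{-1}‖M‖_{∞→∞}}. -/

import Mathlib

open scoped BigOperators
open Matrix
noncomputable section

namespace SLR

/-- Trace inner product `⟨A,B⟩ = tr(AᵀB)`. -/
def inner' {m n : ℕ} (A B : Matrix (Fin m) (Fin n) ℝ) : ℝ := ∑ i, ∑ j, A i j * B i j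

/-- Entrywise 1-norm. -/
def l1 {m n : ℕ} (M : Matrix (Fin m) (Fin n) ℝ) : ℝ := ∑ i, ∑ j, |M i j|

/-- Entrywise ∞-norm (maximum absolute value of an entry). -/
def linf {m n : ℕ} (M : Matrix (Fin m) (Fin n) ℝ) : ℝ := ⨆ i, ⨆ j, |M i j|

/-- Frobenius norm. -/
def frob {m n : ℕ} (M : Matrix (Fin m) (Fin n) ℝ) : ℝ :=
  Real.sqrt (∑ i, ∑ j, (M i j) ^ 2)

/-- `‖M‖_{1→1}`: maximum column absolute sum. -/
def n11 {m n : ℕ} (M : Matrix (Fin m) (Fin n) ℝ) : ℝ := ⨆ j, ∑ i, |M i j|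

/-- `‖M‖_{∞→∞}`: maximum row absolute sum. -/
def nII {m n : ℕ} (M : Matrix (Fin m) (Fin n) ℝ) : ℝ := ⨆ i, ∑ j, |M i j|

/-- Spectral norm `‖M‖_{2→2}`. -/
def spec {m n : ℕ} (M : Matrix (Fin m) (Fin n) ℝ) : ℝ :=
  ‖LinearMap.toContinuousLinearMap (Matrix.toEuclideanLin M)‖

/-- Trace (nuclear) norm: sum of singular values. -/
def traceNorm {m n : ℕ} (M : Matrix (Fin m) (Fin n) ℝ) : ℝ :=
  ∑ i, Real.sqrt ((Matrix.isHermitian_conjTranspose_mul_self M).eigenvalues i)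

/-- The hybrid norm `‖M‖_{♯(ρ)} = max{ρ‖M‖_{1→1}, ρ⁻¹‖M‖_{∞→∞}}`. -/
def sharp {m n : ℕ} (ρ : ℝ) (M : Matrix (Fin m) (Fin n) ℝ) : ℝ :=
  max (ρ * n11 M) (ρ⁻¹ * nII M)

/-- The dual norm `‖·‖_{♭(ρ)}` of `‖·‖_{♯(ρ)}`. -/
def flat {m n : ℕ} (ρ : ℝ) (M : Matrix (Fin m) (Fin n) ℝ) : ℝ :=
  sSup {x : ℝ | ∃ N : Matrix (Fin m) (Fin n) ℝ, sharp ρ N ≤ 1 ∧ x = inner' M N}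

/-- Induced operator norm of a map `T` with respect to the norm `f`. -/
def opNormWrt {m n : ℕ} (f : Matrix (Fin m) (Fin n) ℝ → ℝ)
    (T : Matrix (Fin m) (Fin n) ℝ → Matrix (Fin m) (Fin n) ℝ) : ℝ :=
  sSup {x : ℝ | ∃ M, f M ≤ 1 ∧ x = f (T M)}

/-- Entrywise sign matrix. -/
def signM {m n : ℕ} (M : Matrix (Fin m) (Fin n) ℝ) : Matrix (Fin m) (Fin n) ℝ :=
  Matrix.of fun i j => Real.sign (M i j)

/-- Orthogonal projection onto matrices supported on `supp X`. -/
def POmega {m n : ℕ} (X : Matrix (Fin m) (Fin n) ℝ) (M : Matrix (Fin m) (Fin n) ℝ) :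
    Matrix (Fin m) (Fin n) ℝ :=
  Matrix.of fun i j => if X i j ≠ 0 then M i j else 0

/-- Orthogonal projection onto the tangent space `T` determined by `U`, `V`. -/
def PT {m n r : ℕ} (U : Matrix (Fin m) (Fin r) ℝ) (V : Matrix (Fin n) (Fin r) ℝ)
    (M : Matrix (Fin m) (Fin n) ℝ) : Matrix (Fin m) (Fin n) ℝ :=
  U * Uᵀ * M + M * (V * Vᵀ) - U * Uᵀ * M * (V * Vᵀ)

/-- `‖U‖_{2→∞}`: maximum row Euclidean norm. -/
def two2inf {m r : ℕ} (U : Matrix (Fin m) (Fin r) ℝ) : ℝ :=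
  ⨆ i, Real.sqrt (∑ k, (U i k) ^ 2)

/-- The sparsity measure `α(ρ)` of `X̄_S`. -/
def alpha {m n : ℕ} (X : Matrix (Fin m) (Fin n) ℝ) (ρ : ℝ) : ℝ :=
  max (ρ * n11 (signM X)) (ρ⁻¹ * nII (signM X))

/-- The incoherence measure `β(ρ)` of the singular vectors `U`, `V`. -/
def beta {m n r : ℕ} (U : Matrix (Fin m) (Fin r) ℝ) (V : Matrix (Fin n) (Fin r) ℝ)
    (ρ : ℝ) : ℝ :=
  ρ⁻¹ * linf (U * Uᵀ) + ρ * linf (V * Vᵀ) + two2inf U * two2inf V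

/-- Number of nonzero entries. -/
def suppCard {m n : ℕ} (X : Matrix (Fin m) (Fin n) ℝ) : ℕ :=
  (Finset.univ.filter fun p : Fin m × Fin n => X p.1 p.2 ≠ 0).card
/-!
Split `P_Ω ∘ P_T` through the entrywise maximum norm. Restricting to the support of `X̄_S` bounds
every entry of `P_Ω N` by `‖N‖_∞` times the corresponding entry of `sign X̄_S`, whence
`‖P_Ω N‖_♯ ≤ α(ρ) ‖N‖_∞`. For `P_T`, the terms `ŪŪᵀM` and `MV̄V̄ᵀ` are controlled entrywise by the
column and row sums of `M`; the term `ŪŪᵀMV̄V̄ᵀ` is the pairing of the `i`-th row of `ŪŪᵀ` with `M`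
applied to the `j`-th column of `V̄V̄ᵀ`, so Cauchy–Schwarz and the Schur test
`‖M‖₂₂² ≤ ‖M‖₁₁ ‖M‖∞∞ ≤ ‖M‖_♯²` give `‖P_T M‖_∞ ≤ β(ρ) ‖M‖_♯`.
-/

section Norms

variable {m n : ℕ}

lemma sum_abs_le_n11 (M : Matrix (Fin m) (Fin n) ℝ) (j : Fin n) : ∑ i, |M i j| ≤ n11 M :=
  le_ciSup (f := fun j => ∑ i, |M i j|) (Finite.bddAbove_range _) j

lemma sum_abs_le_nII (M : Matrix (Fin m) (Fin n) ℝ) (i : Fin m) : ∑ j, |M i j| ≤ nII M :=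
  le_ciSup (f := fun i => ∑ j, |M i j|) (Finite.bddAbove_range _) i

lemma abs_le_linf (M : Matrix (Fin m) (Fin n) ℝ) (i : Fin m) (j : Fin n) : |M i j| ≤ linf M :=
  (le_ciSup (Finite.bddAbove_range _) j).trans
    (le_ciSup (Finite.bddAbove_range fun i => ⨆ j, |M i j|) i)

lemma n11_nonneg (M : Matrix (Fin m) (Fin n) ℝ) : 0 ≤ n11 M :=
  Real.iSup_nonneg fun _ => Finset.sum_nonneg fun _ _ => abs_nonneg _

lemma nII_nonneg (M : Matrix (Fin m) (Fin n) ℝ) : 0 ≤ nII M :=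
  Real.iSup_nonneg fun _ => Finset.sum_nonneg fun _ _ => abs_nonneg _

lemma linf_nonneg (M : Matrix (Fin m) (Fin n) ℝ) : 0 ≤ linf M :=
  Real.iSup_nonneg fun _ => Real.iSup_nonneg fun _ => abs_nonneg _

lemma two2inf_nonneg (U : Matrix (Fin m) (Fin n) ℝ) : 0 ≤ two2inf U :=
  Real.iSup_nonneg fun _ => Real.sqrt_nonneg _

lemma dotProduct_self_nonneg {ι : Type*} [Fintype ι] (v : ι → ℝ) : 0 ≤ v ⬝ᵥ v :=
  Finset.sum_nonneg fun _ _ => mul_self_nonneg _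

lemma sqrt_dotProduct_self_le_two2inf (U : Matrix (Fin m) (Fin n) ℝ) (i : Fin m) :
    √(U i ⬝ᵥ U i) ≤ two2inf U := by
  have h : U i ⬝ᵥ U i = ∑ k, U i k ^ 2 := by simp only [dotProduct, sq]
  rw [h]
  exact le_ciSup (f := fun i => √(∑ k, U i k ^ 2)) (Finite.bddAbove_range _) i

lemma linf_le_of_abs_le {M : Matrix (Fin m) (Fin n) ℝ} {c : ℝ} (hc : 0 ≤ c)
    (h : ∀ i j, |M i j| ≤ c) : linf M ≤ c :=
  Real.iSup_le (fun i => Real.iSup_le (h i) hc) hc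

lemma n11_le_of_abs_le {A B : Matrix (Fin m) (Fin n) ℝ} {c : ℝ} (hc : 0 ≤ c)
    (h : ∀ i j, |A i j| ≤ c * |B i j|) : n11 A ≤ c * n11 B := by
  refine Real.iSup_le (fun j => ?_) (mul_nonneg hc (n11_nonneg B))
  calc ∑ i, |A i j| ≤ ∑ i, c * |B i j| := Finset.sum_le_sum fun i _ => h i j
    _ = c * ∑ i, |B i j| := (Finset.mul_sum _ _ _).symm
    _ ≤ c * n11 B := mul_le_mul_of_nonneg_left (sum_abs_le_n11 B j) hc

lemma nII_le_of_abs_le {A B : Matrix (Fin m) (Fin n) ℝ} {c : ℝ} (hc : 0 ≤ c)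
    (h : ∀ i j, |A i j| ≤ c * |B i j|) : nII A ≤ c * nII B := by
  refine Real.iSup_le (fun i => ?_) (mul_nonneg hc (nII_nonneg B))
  calc ∑ j, |A i j| ≤ ∑ j, c * |B i j| := Finset.sum_le_sum fun j _ => h i j
    _ = c * ∑ j, |B i j| := (Finset.mul_sum _ _ _).symm
    _ ≤ c * nII B := mul_le_mul_of_nonneg_left (sum_abs_le_nII B i) hc

variable {ρ : ℝ}

lemma sharp_nonneg (hρ : 0 ≤ ρ) (M : Matrix (Fin m) (Fin n) ℝ) : 0 ≤ sharp ρ M :=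
  (mul_nonneg hρ (n11_nonneg M)).trans (le_max_left _ _)

lemma sharp_le_of_abs_le {A B : Matrix (Fin m) (Fin n) ℝ} {c : ℝ} (hρ : 0 ≤ ρ) (hc : 0 ≤ c)
    (h : ∀ i j, |A i j| ≤ c * |B i j|) : sharp ρ A ≤ c * sharp ρ B := by
  rw [sharp, sharp, mul_max_of_nonneg _ _ hc, mul_left_comm c ρ, mul_left_comm c ρ⁻¹]
  exact max_le_max (mul_le_mul_of_nonneg_left (n11_le_of_abs_le hc h) hρ)
    (mul_le_mul_of_nonneg_left (nII_le_of_abs_le hc h) (inv_nonneg.2 hρ))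

lemma n11_le_inv_mul_sharp (hρ : 0 < ρ) (M : Matrix (Fin m) (Fin n) ℝ) :
    n11 M ≤ ρ⁻¹ * sharp ρ M :=
  (le_inv_mul_iff₀ hρ).2 (le_max_left _ _)

lemma nII_le_mul_sharp (hρ : 0 < ρ) (M : Matrix (Fin m) (Fin n) ℝ) :
    nII M ≤ ρ * sharp ρ M :=
  (inv_mul_le_iff₀ hρ).1 (le_max_right _ _)

lemma sqrt_n11_mul_nII_le_sharp (hρ : 0 < ρ) (M : Matrix (Fin m) (Fin n) ℝ) :
    √(n11 M * nII M) ≤ sharp ρ M := by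
  have h : n11 M * nII M = (ρ * n11 M) * (ρ⁻¹ * nII M) := by field_simp
  rw [h, ← Real.sqrt_mul_self (sharp_nonneg hρ.le M)]
  exact Real.sqrt_le_sqrt (mul_le_mul (le_max_left _ _) (le_max_right _ _)
    (mul_nonneg (inv_nonneg.2 hρ.le) (nII_nonneg M)) (sharp_nonneg hρ.le M))

end Norms

lemma opNormWrt_le {m n : ℕ} {f : Matrix (Fin m) (Fin n) ℝ → ℝ}
    {T : Matrix (Fin m) (Fin n) ℝ → Matrix (Fin m) (Fin n) ℝ} {c : ℝ} (hc : 0 ≤ c)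
    (h : ∀ M, f (T M) ≤ c * f M) : opNormWrt f T ≤ c := by
  refine Real.sSup_le ?_ hc
  rintro x ⟨M, hM, rfl⟩
  exact (h M).trans (mul_le_of_le_one_right hc hM)

section Incoherence

variable {m n r : ℕ}

lemma alpha_eq_sharp_signM (X : Matrix (Fin m) (Fin n) ℝ) (ρ : ℝ) :
    alpha X ρ = sharp ρ (signM X) := rfl

lemma abs_POmega_apply_le (X N : Matrix (Fin m) (Fin n) ℝ) (i : Fin m) (j : Fin n) :
    |POmega X N i j| ≤ linf N * |signM X i j| := by
  rcases lt_trichotomy (X i j) 0 with h | h | h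
  · simpa [POmega, signM, h.ne, Real.sign_of_neg h] using abs_le_linf N i j
  · simpa [POmega, h] using mul_nonneg (linf_nonneg N) (abs_nonneg (signM X i j))
  · simpa [POmega, signM, h.ne', Real.sign_of_pos h] using abs_le_linf N i j

lemma sharp_POmega_le {ρ : ℝ} (hρ : 0 ≤ ρ) (X N : Matrix (Fin m) (Fin n) ℝ) :
    sharp ρ (POmega X N) ≤ alpha X ρ * linf N := by
  rw [alpha_eq_sharp_signM, mul_comm]
  exact sharp_le_of_abs_le hρ (linf_nonneg N) (abs_POmega_apply_le X N)

lemma abs_mul_apply_le_linf_mul_n11 (A : Matrix (Fin m) (Fin r) ℝ)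
    (M : Matrix (Fin r) (Fin n) ℝ) (i : Fin m) (j : Fin n) :
    |(A * M) i j| ≤ linf A * n11 M := by
  rw [Matrix.mul_apply]
  calc |∑ k, A i k * M k j| ≤ ∑ k, |A i k| * |M k j| :=
        (Finset.abs_sum_le_sum_abs _ _).trans_eq (by simp only [abs_mul])
    _ ≤ ∑ k, linf A * |M k j| :=
        Finset.sum_le_sum fun k _ => mul_le_mul_of_nonneg_right (abs_le_linf A i k) (abs_nonneg _)
    _ ≤ linf A * n11 M := by
        rw [← Finset.mul_sum]
        exact mul_le_mul_of_nonneg_left (sum_abs_le_n11 M j) (linf_nonneg A)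

lemma abs_mul_apply_le_nII_mul_linf (M : Matrix (Fin m) (Fin r) ℝ)
    (B : Matrix (Fin r) (Fin n) ℝ) (i : Fin m) (j : Fin n) :
    |(M * B) i j| ≤ nII M * linf B := by
  rw [Matrix.mul_apply]
  calc |∑ k, M i k * B k j| ≤ ∑ k, |M i k| * |B k j| :=
        (Finset.abs_sum_le_sum_abs _ _).trans_eq (by simp only [abs_mul])
    _ ≤ ∑ k, |M i k| * linf B :=
        Finset.sum_le_sum fun k _ => mul_le_mul_of_nonneg_left (abs_le_linf B k j) (abs_nonneg _)
    _ ≤ nII M * linf B := by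
        rw [← Finset.sum_mul]
        exact mul_le_mul_of_nonneg_right (sum_abs_le_nII M i) (linf_nonneg B)

lemma dotProduct_mulVec_self_of_transpose_mul_self {U : Matrix (Fin m) (Fin r) ℝ}
    (hU : Uᵀ * U = 1) (x : Fin r → ℝ) : (U *ᵥ x) ⬝ᵥ (U *ᵥ x) = x ⬝ᵥ x := by
  rw [Matrix.dotProduct_mulVec, ← Matrix.vecMul_transpose, Matrix.vecMul_vecMul, hU,
    Matrix.vecMul_one]

lemma dotProduct_mulVec_self_le (M : Matrix (Fin m) (Fin n) ℝ) (z : Fin n → ℝ) :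
    (M *ᵥ z) ⬝ᵥ (M *ᵥ z) ≤ n11 M * nII M * (z ⬝ᵥ z) := by
  have row : ∀ i, (M *ᵥ z) i ^ 2 ≤ nII M * ∑ k, |M i k| * z k ^ 2 := by
    intro i
    calc (M *ᵥ z) i ^ 2 = |∑ k, M i k * z k| ^ 2 := (sq_abs _).symm
      _ ≤ (∑ k, |M i k| * |z k|) ^ 2 := by
          refine pow_le_pow_left₀ (abs_nonneg _) ?_ 2
          exact (Finset.abs_sum_le_sum_abs _ _).trans_eq (by simp only [abs_mul])
      _ ≤ (∑ k, |M i k|) * ∑ k, |M i k| * z k ^ 2 :=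
          Finset.sum_sq_le_sum_mul_sum_of_sq_le_mul _ (fun k _ => abs_nonneg _)
            (fun k _ => by positivity) (fun k _ => le_of_eq (by rw [mul_pow, sq_abs (z k)]; ring))
      _ ≤ nII M * ∑ k, |M i k| * z k ^ 2 :=
          mul_le_mul_of_nonneg_right (sum_abs_le_nII M i) (by positivity)
  calc (M *ᵥ z) ⬝ᵥ (M *ᵥ z) = ∑ i, (M *ᵥ z) i ^ 2 := by simp only [dotProduct, sq]
    _ ≤ ∑ i, nII M * ∑ k, |M i k| * z k ^ 2 := Finset.sum_le_sum fun i _ => row i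
    _ = nII M * ∑ k, (∑ i, |M i k|) * z k ^ 2 := by
        rw [← Finset.mul_sum, Finset.sum_comm]
        simp only [Finset.sum_mul]
    _ ≤ nII M * ∑ k, n11 M * z k ^ 2 := by
        gcongr with k
        · exact nII_nonneg M
        · exact sum_abs_le_n11 M k
    _ = n11 M * nII M * (z ⬝ᵥ z) := by
        rw [← Finset.mul_sum]
        simp only [dotProduct, sq]
        ring

lemma mul_mul_mul_apply_eq_dotProduct (U : Matrix (Fin m) (Fin r) ℝ)
    (M : Matrix (Fin m) (Fin n) ℝ) (V : Matrix (Fin n) (Fin r) ℝ) (i : Fin m) (j : Fin n) :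
    (U * Uᵀ * M * (V * Vᵀ)) i j = (U *ᵥ U i) ⬝ᵥ (M *ᵥ (V *ᵥ V j)) := by
  have hrow : (fun k => (U * Uᵀ) i k) = U *ᵥ U i := by
    funext k
    simp only [Matrix.mul_apply, Matrix.mulVec, dotProduct, Matrix.transpose_apply, mul_comm]
  have hcol : (fun k => (M * V * Vᵀ) k j) = M *ᵥ (V *ᵥ V j) := by
    rw [Matrix.mulVec_mulVec]
    rfl
  calc (U * Uᵀ * M * (V * Vᵀ)) i j = (U * Uᵀ * (M * V * Vᵀ)) i j := by
        simp only [Matrix.mul_assoc]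
    _ = (fun k => (U * Uᵀ) i k) ⬝ᵥ fun k => (M * V * Vᵀ) k j := Matrix.mul_apply' ..
    _ = _ := by rw [hrow, hcol]

lemma abs_mul_mul_apply_le {U : Matrix (Fin m) (Fin r) ℝ} {V : Matrix (Fin n) (Fin r) ℝ}
    (hU : Uᵀ * U = 1) (hV : Vᵀ * V = 1) (M : Matrix (Fin m) (Fin n) ℝ) (i : Fin m) (j : Fin n) :
    |(U * Uᵀ * M * (V * Vᵀ)) i j| ≤ two2inf U * two2inf V * √(n11 M * nII M) := by
  set w := V *ᵥ V j
  have hsq : ((U *ᵥ U i) ⬝ᵥ (M *ᵥ w)) ^ 2 ≤ (U i ⬝ᵥ U i) * (n11 M * nII M) * (V j ⬝ᵥ V j) := by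
    calc ((U *ᵥ U i) ⬝ᵥ (M *ᵥ w)) ^ 2
        ≤ ((U *ᵥ U i) ⬝ᵥ (U *ᵥ U i)) * ((M *ᵥ w) ⬝ᵥ (M *ᵥ w)) := by
          simpa only [dotProduct, sq] using Finset.sum_mul_sq_le_sq_mul_sq _ (U *ᵥ U i) (M *ᵥ w)
      _ ≤ (U i ⬝ᵥ U i) * (n11 M * nII M * (w ⬝ᵥ w)) := by
          rw [dotProduct_mulVec_self_of_transpose_mul_self hU]
          exact mul_le_mul_of_nonneg_left (dotProduct_mulVec_self_le M w)
            (dotProduct_self_nonneg _)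
      _ = _ := by rw [dotProduct_mulVec_self_of_transpose_mul_self hV]; ring
  rw [mul_mul_mul_apply_eq_dotProduct]
  refine (Real.abs_le_sqrt hsq).trans ?_
  have hprod : 0 ≤ n11 M * nII M := mul_nonneg (n11_nonneg M) (nII_nonneg M)
  rw [Real.sqrt_mul (mul_nonneg (dotProduct_self_nonneg _) hprod),
    Real.sqrt_mul (dotProduct_self_nonneg _), mul_right_comm]
  exact mul_le_mul_of_nonneg_right
    (mul_le_mul (sqrt_dotProduct_self_le_two2inf U i) (sqrt_dotProduct_self_le_two2inf V j)
      (Real.sqrt_nonneg _) (two2inf_nonneg U)) (Real.sqrt_nonneg _)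

lemma beta_nonneg {ρ : ℝ} (hρ : 0 ≤ ρ) (U : Matrix (Fin m) (Fin r) ℝ)
    (V : Matrix (Fin n) (Fin r) ℝ) : 0 ≤ beta U V ρ :=
  add_nonneg (add_nonneg (mul_nonneg (inv_nonneg.2 hρ) (linf_nonneg _))
    (mul_nonneg hρ (linf_nonneg _))) (mul_nonneg (two2inf_nonneg U) (two2inf_nonneg V))

lemma linf_PT_le {U : Matrix (Fin m) (Fin r) ℝ} {V : Matrix (Fin n) (Fin r) ℝ}
    (hU : Uᵀ * U = 1) (hV : Vᵀ * V = 1) {ρ : ℝ} (hρ : 0 < ρ) (M : Matrix (Fin m) (Fin n) ℝ) :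
    linf (PT U V M) ≤ beta U V ρ * sharp ρ M := by
  refine linf_le_of_abs_le (mul_nonneg (beta_nonneg hρ.le U V) (sharp_nonneg hρ.le M))
    fun i j => ?_
  have hUUM : |(U * Uᵀ * M) i j| ≤ linf (U * Uᵀ) * (ρ⁻¹ * sharp ρ M) :=
    (abs_mul_apply_le_linf_mul_n11 _ M i j).trans
      (mul_le_mul_of_nonneg_left (n11_le_inv_mul_sharp hρ M) (linf_nonneg _))
  have hMVV : |(M * (V * Vᵀ)) i j| ≤ ρ * sharp ρ M * linf (V * Vᵀ) :=
    (abs_mul_apply_le_nII_mul_linf M _ i j).trans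
      (mul_le_mul_of_nonneg_right (nII_le_mul_sharp hρ M) (linf_nonneg _))
  have hUUMVV : |(U * Uᵀ * M * (V * Vᵀ)) i j| ≤ two2inf U * two2inf V * sharp ρ M :=
    (abs_mul_mul_apply_le hU hV M i j).trans (mul_le_mul_of_nonneg_left
      (sqrt_n11_mul_nII_le_sharp hρ M) (mul_nonneg (two2inf_nonneg U) (two2inf_nonneg V)))
  calc |PT U V M i j|
      ≤ |(U * Uᵀ * M) i j| + |(M * (V * Vᵀ)) i j| + |(U * Uᵀ * M * (V * Vᵀ)) i j| :=
        (abs_sub _ _).trans (add_le_add (abs_add_le _ _) le_rfl)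
    _ ≤ linf (U * Uᵀ) * (ρ⁻¹ * sharp ρ M) + ρ * sharp ρ M * linf (V * Vᵀ)
        + two2inf U * two2inf V * sharp ρ M := add_le_add (add_le_add hUUM hMVV) hUUMVV
    _ = beta U V ρ * sharp ρ M := by
        rw [beta]
        ring

end Incoherence

/-- `‖P_Ω ∘ P_T‖_{♯(ρ)→♯(ρ)} ≤ α(ρ)β(ρ)`. -/
theorem POmega_comp_PT_sharp_opNorm {m n r : ℕ} (Xs : Matrix (Fin m) (Fin n) ℝ)
    (U : Matrix (Fin m) (Fin r) ℝ) (V : Matrix (Fin n) (Fin r) ℝ)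
    (hU : Uᵀ * U = 1) (hV : Vᵀ * V = 1) (ρ : ℝ) (hρ : 0 < ρ) :
    opNormWrt (sharp ρ) (fun M => POmega Xs (PT U V M)) ≤ alpha Xs ρ * beta U V ρ := by
  have hα : 0 ≤ alpha Xs ρ := sharp_nonneg hρ.le (signM Xs)
  refine opNormWrt_le (mul_nonneg hα (beta_nonneg hρ.le U V)) fun M => ?_
  calc sharp ρ (POmega Xs (PT U V M)) ≤ alpha Xs ρ * linf (PT U V M) :=
        sharp_POmega_le hρ.le Xs _
    _ ≤ alpha Xs ρ * (beta U V ρ * sharp ρ M) :=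
        mul_le_mul_of_nonneg_left (linf_PT_le hU hV hρ M) hα
    _ = alpha Xs ρ * beta U V ρ * sharp ρ M := (mul_assoc _ _ _).symm

end SLR
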